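/- Let S ∈ ℝ^{d×d} be a symmetric matrix and let J be a subset of the index set {1, ..., d}. Let B be the submatrix of S consisting of the rows of S with index not in J (a matrix of size (d−|J|) × d), and let L ∈ ℝ^{d×d} be the matrix defined by L_{ij} = S_{ij} if i ∉ J or j ∉ J, and L_{ij} = 0 if both i ∈ J and j ∈ J (i.e., S with the J×J block zeroed out). Then ‖L‖_op ≤ 2 ‖B‖_op. -/

import Mathlib

/-! Let `P` be the rows of `S` outside `J`, extended by zero, and `Q` the coordinate projection
onto `J`. By symmetry of `S`, `L = P + (P Q)ᵀ`. Since `P = E B` for the isometric embedding `E` of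
the coordinates outside `J`, `‖P‖ ≤ ‖B‖`; and `‖(P Q)ᵀ‖ = ‖P Q‖ ≤ ‖P‖` because `‖Q‖ ≤ 1`. -/

open MeasureTheory ProbabilityTheory

/-- Operator norm (largest singular value) of a real matrix, as the norm of the
induced linear map between Euclidean spaces. -/
noncomputable def opNorm {m n : Type*} [Fintype m] [Fintype n] [DecidableEq n]
    (M : Matrix m n ℝ) : ℝ :=
  ‖LinearMap.toContinuousLinearMap (Matrix.toEuclideanLin M)‖

/-- Squared Frobenius norm of a real matrix. -/
noncomputable def frobNormSq {m n : Type*} [Fintype m] [Fintype n]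
    (M : Matrix m n ℝ) : ℝ := ∑ i, ∑ j, (M i j) ^ 2

open scoped Matrix.Norms.L2Operator

lemma opNorm_eq_l2_opNorm {m n : Type*} [Fintype m] [Fintype n] [DecidableEq n]
    (M : Matrix m n ℝ) : opNorm M = ‖M‖ := rfl

namespace Matrix

variable {m n : Type*}

section Algebra

variable {R : Type*} [Semiring R]

lemma submatrix_one_mul_submatrix [Fintype m] [DecidableEq m] {p : m → Prop} [DecidablePred p]
    (M : Matrix m n R) :
    -- without the ascriptions `*` would fall back to the `CStarMatrix` default instance
    (1 : Matrix m m R).submatrix id (Subtype.val : Subtype p → m) *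
        M.submatrix (Subtype.val : Subtype p → m) id =
      of fun i j => if p i then M i j else 0 := by
  ext i j
  simp only [mul_apply, of_apply, submatrix_apply, id, one_apply, ite_mul, one_mul, zero_mul]
  split_ifs with hi
  · rw [Fintype.sum_eq_single ⟨i, hi⟩ fun k hk => if_neg fun h => hk (Subtype.ext h.symm),
      if_pos rfl]
  · exact Finset.sum_eq_zero fun k _ => if_neg fun h : i = k => hi (h ▸ k.2)

-- the `J × Jᶜ` block of a symmetric matrix is the transpose of its `Jᶜ × J` block
lemma IsSymm.ite_mem_and_mem_eq_add_transpose [Fintype n] [DecidableEq n] {S : Matrix n n R}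
    (hS : S.IsSymm) (J : Finset n) :
    (of fun i j => if i ∈ J ∧ j ∈ J then 0 else S i j) =
      of (fun i j => if i ∉ J then S i j else 0) +
        (of (fun i j => if i ∉ J then S i j else 0) *
          diagonal fun j => if j ∈ J then (1 : R) else 0)ᵀ := by
  ext i j
  simp only [add_apply, transpose_apply, mul_diagonal, of_apply, hS.apply i j]
  by_cases hi : i ∈ J <;> by_cases hj : j ∈ J <;> simp [hi, hj]

end Algebra

variable {𝕜 : Type*} [RCLike 𝕜] [Fintype m] [Fintype n] [DecidableEq n]

lemma l2_opNorm_le_one_of_conjTranspose_mul_self_eq_one {A : Matrix m n 𝕜} (hA : Aᴴ * A = 1) :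
    ‖A‖ ≤ 1 := by
  have hsq : ‖A‖ * ‖A‖ ≤ 1 := by
    rw [← l2_opNorm_conjTranspose_mul_self, hA, ← diagonal_one, l2_opNorm_diagonal]
    exact (pi_norm_le_iff_of_nonneg zero_le_one).mpr fun _ => by simp
  nlinarith [norm_nonneg A]

lemma l2_opNorm_submatrix_one_le_one [DecidableEq m] {e : n → m} (he : Function.Injective e) :
    ‖(1 : Matrix m m 𝕜).submatrix id e‖ ≤ 1 := by
  refine l2_opNorm_le_one_of_conjTranspose_mul_self_eq_one ?_
  rw [conjTranspose_submatrix, conjTranspose_one, ← submatrix_mul _ _ _ _ _ Function.bijective_id,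
    mul_one, submatrix_one _ he]

lemma l2_opNorm_diagonal_le_one {v : n → 𝕜} (hv : ∀ i, ‖v i‖ ≤ 1) : ‖diagonal v‖ ≤ 1 := by
  rw [l2_opNorm_diagonal]
  exact (pi_norm_le_iff_of_nonneg zero_le_one).mpr hv

lemma l2_opNorm_transpose [DecidableEq m] (A : Matrix m n ℝ) : ‖Aᵀ‖ = ‖A‖ := by
  rw [← conjTranspose_eq_transpose_of_trivial, l2_opNorm_conjTranspose]

end Matrix

/-- **Block-zeroing step (proof of Theorem 1.3).** Let `S ∈ ℝ^{d×d}` be symmetric and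
`J ⊆ {1,…,d}`. Let `B` be the submatrix of rows of `S` with index not in `J`, and let
`L` be `S` with the `J×J` block zeroed out. Then `‖L‖_op ≤ 2 ‖B‖_op`. -/
theorem block_zeroing_opNorm (d : ℕ) (S : Matrix (Fin d) (Fin d) ℝ) (hS : S.IsSymm)
    (J : Finset (Fin d))
    (B : Matrix {i : Fin d // i ∉ J} (Fin d) ℝ) (hB : ∀ i j, B i j = S i.1 j)
    (L : Matrix (Fin d) (Fin d) ℝ)
    (hL : ∀ i j, L i j = if i ∈ J ∧ j ∈ J then 0 else S i j) :
    opNorm L ≤ 2 * opNorm B := by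
  have hB' : S.submatrix (Subtype.val : {i // i ∉ J} → Fin d) id = B :=
    Matrix.ext fun i j => (hB i j).symm
  obtain rfl : L = Matrix.of fun i j => if i ∈ J ∧ j ∈ J then 0 else S i j := Matrix.ext hL
  rw [opNorm_eq_l2_opNorm, opNorm_eq_l2_opNorm, hS.ite_mem_and_mem_eq_add_transpose J,
    ← Matrix.submatrix_one_mul_submatrix (p := (· ∉ J)) S, hB', two_mul]
  set E := (1 : Matrix (Fin d) (Fin d) ℝ).submatrix id (Subtype.val : {i // i ∉ J} → Fin d)
  have hE : ‖E‖ ≤ 1 := Matrix.l2_opNorm_submatrix_one_le_one Subtype.val_injective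
  have hQ : ‖Matrix.diagonal fun j : Fin d => if j ∈ J then (1 : ℝ) else 0‖ ≤ 1 :=
    Matrix.l2_opNorm_diagonal_le_one fun j => by split_ifs <;> simp
  have hEB : ‖E * B‖ ≤ ‖B‖ :=
    (Matrix.l2_opNorm_mul _ _).trans (mul_le_of_le_one_left (norm_nonneg _) hE)
  refine (norm_add_le _ _).trans (add_le_add hEB ?_)
  rw [Matrix.l2_opNorm_transpose]
  exact ((Matrix.l2_opNorm_mul _ _).trans (mul_le_of_le_one_right (norm_nonneg _) hQ)).trans hEB
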